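/- In the canonical RFA of a regular language L, the transitions are saturated: if L₂ is any prime residual with L₂ ⊆ a⁻¹L₁, then L₂ ∈ δ(L₁, a); moreover adding any transition (L₁, a, L₂) with L₂ ⊄ a⁻¹L₁ would change the accepted language, i.e., would make the automaton accept some string not in L. -/

import Mathlib

def res {α : Type*} (L : Set (List α)) (u : List α) : Set (List α) := {v | u ++ v ∈ L}

def Res {α : Type*} (L : Set (List α)) : Set (Set (List α)) := {L' | ∃ u, L' = res L u}

/-- A language is prime in a class `𝕃` if it belongs to `𝕃` and is not the union of the
languages of `𝕃` strictly contained in it. -/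
def IsPrimeIn {α : Type*} (𝕃 : Set (Set (List α))) (L : Set (List α)) : Prop :=
  L ∈ 𝕃 ∧ L ≠ ⋃₀ {L' | L' ∈ 𝕃 ∧ L' ⊂ L}

def IsRegularLang {α : Type*} (L : Set (List α)) : Prop :=
  ∃ (σ : Type) (_ : Fintype σ) (M : DFA α σ), ∀ w, w ∈ M.accepts ↔ w ∈ L

/-- The canonical RFA of a language `L`: states are the prime residual languages of `L`. -/
def canonicalRFA {α : Type*} (L : Set (List α)) :
    NFA α {L' : Set (List α) // IsPrimeIn (Res L) L'} where
  step q a := {q' | q'.1 ⊆ res q.1 [a]}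
  start := {q | q.1 ⊆ L}
  accept := {q | [] ∈ q.1}

/-- The language accepted from a single state `q` of an NFA. -/
def lq {α σ : Type*} (M : NFA α σ) (q : σ) : Set (List α) :=
  {w | (M.evalFrom {q} w ∩ M.accept).Nonempty}


/-! Because `L` is regular it has finitely many residuals, so every residual is the union of the
prime residuals it contains. Hence the states of the canonical RFA reached by reading `u` are
contained in `u⁻¹L` and cover it; a prime `u⁻¹L` is therefore itself reached by `u`, and every
state `q` accepts exactly the language `q`. Given `v ∈ L₂ \ a⁻¹L₁` with `L₁ = u⁻¹L`, the extra
transition `(L₁, a, L₂)` lets the automaton accept `u a v`, which is not in `L`. -/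

section Residuals

variable {α : Type*}

theorem res_res (L : Set (List α)) (u v : List α) : res (res L u) v = res L (u ++ v) := by
  ext w
  simp [res, List.append_assoc]

theorem res_mem_Res {L R : Set (List α)} (hR : R ∈ Res L) (u : List α) : res R u ∈ Res L := by
  obtain ⟨w, rfl⟩ := hR
  exact ⟨w ++ u, res_res L w u⟩

theorem IsRegularLang.finite_Res {L : Set (List α)} (hreg : IsRegularLang L) :
    (Res L).Finite := by
  obtain ⟨σ, _, M, hM⟩ := hreg
  refine (Set.finite_range fun s : σ => {v | M.evalFrom s v ∈ M.accept}).subset ?_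
  rintro _ ⟨u, rfl⟩
  refine ⟨M.eval u, Set.ext fun v => ?_⟩
  simp only [res, Set.mem_ofPred_eq, ← hM (u ++ v), DFA.mem_accepts, DFA.eval,
    DFA.evalFrom_of_append]

theorem IsPrimeIn.mem_of_sUnion_eq {𝕃 𝒮 : Set (Set (List α))} {P : Set (List α)}
    (hP : IsPrimeIn 𝕃 P) (h𝒮 : 𝒮 ⊆ 𝕃) (hle : ∀ R ∈ 𝒮, R ⊆ P) (hunion : ⋃₀ 𝒮 = P) : P ∈ 𝒮 := by
  by_contra hnot
  refine hP.2 (subset_antisymm ?_ (Set.sUnion_subset fun R hR => hR.2.subset))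
  rintro x hx
  rw [← hunion] at hx
  obtain ⟨R, hR, hxR⟩ := hx
  exact ⟨R, ⟨h𝒮 hR, (hle R hR).ssubset_of_ne (by rintro rfl; exact hnot hR)⟩, hxR⟩

theorem sUnion_isPrimeIn_subset {L R : Set (List α)} (hfin : (Res L).Finite) (hR : R ∈ Res L) :
    ⋃₀ {P | IsPrimeIn (Res L) P ∧ P ⊆ R} = R := by
  refine subset_antisymm (Set.sUnion_subset fun P hP => hP.2) ?_
  refine hfin.wellFoundedOn.induction (r := (· ⊂ ·)) hR
    (P := fun R => R ⊆ ⋃₀ {P | IsPrimeIn (Res L) P ∧ P ⊆ R}) fun R hR ih x hx => ?_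
  by_cases hprime : IsPrimeIn (Res L) R
  · exact ⟨R, ⟨hprime, subset_rfl⟩, hx⟩
  have hR_eq : R = ⋃₀ {R' | R' ∈ Res L ∧ R' ⊂ R} := not_ne_iff.mp fun h => hprime ⟨hR, h⟩
  rw [hR_eq] at hx
  obtain ⟨R', ⟨hR', hR'R⟩, hxR'⟩ := hx
  obtain ⟨P, ⟨hP, hPR'⟩, hxP⟩ := ih R' hR' hR'R hxR'
  exact ⟨P, ⟨hP, hPR'.trans hR'R.subset⟩, hxP⟩

end Residuals

namespace NFA

variable {α σ : Type*} {M M' : NFA α σ}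

theorem evalFrom_subset_evalFrom (hstep : ∀ q a, M.step q a ⊆ M'.step q a) {S S' : Set σ}
    (hS : S ⊆ S') (w : List α) : M.evalFrom S w ⊆ M'.evalFrom S' w := by
  induction w generalizing S S' with
  | nil => exact hS
  | cons a w ih =>
    refine ih fun q hq => ?_
    obtain ⟨p, hp, hqp⟩ := mem_stepSet.mp hq
    exact mem_stepSet.mpr ⟨p, hS hp, hstep p a hqp⟩

theorem acceptsFrom_subset_acceptsFrom (hstep : ∀ q a, M.step q a ⊆ M'.step q a)
    (haccept : M.accept ⊆ M'.accept) {S S' : Set σ} (hS : S ⊆ S') :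
    M.acceptsFrom S ≤ M'.acceptsFrom S' := fun _ ⟨q, hq, hqw⟩ =>
  ⟨q, haccept hq, evalFrom_subset_evalFrom hstep hS _ hqw⟩

end NFA

section CanonicalRFA

variable {α : Type*} {L : Set (List α)}

theorem biUnion_isPrimeIn_subset (hfin : (Res L).Finite) {R : Set (List α)}
    (hR : R ∈ Res L) : ⋃ q ∈ {q : {P // IsPrimeIn (Res L) P} | q.1 ⊆ R}, q.1 = R := by
  conv_rhs => rw [← sUnion_isPrimeIn_subset hfin hR]
  ext x
  simp only [Set.mem_iUnion, Set.mem_sUnion, Set.mem_ofPred_eq, exists_prop, Subtype.exists]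
  grind

theorem canonicalRFA_biUnion_stepSet (hfin : (Res L).Finite)
    (S : Set {P // IsPrimeIn (Res L) P}) (a : α) :
    ⋃ q ∈ (canonicalRFA L).stepSet S a, q.1 = res (⋃ q ∈ S, q.1) [a] :=
  calc ⋃ q ∈ (canonicalRFA L).stepSet S a, q.1
      = ⋃ p ∈ S, ⋃ q ∈ (canonicalRFA L).step p a, q.1 := by
        simp only [NFA.stepSet, Set.biUnion_iUnion]
    _ = ⋃ p ∈ S, res p.1 [a] :=
        Set.iUnion₂_congr fun p _ => biUnion_isPrimeIn_subset hfin (res_mem_Res p.2.1 [a])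
    _ = res (⋃ p ∈ S, p.1) [a] := Set.preimage_iUnion₂.symm

theorem canonicalRFA_biUnion_evalFrom (hfin : (Res L).Finite)
    (S : Set {P // IsPrimeIn (Res L) P}) (w : List α) :
    ⋃ q ∈ (canonicalRFA L).evalFrom S w, q.1 = res (⋃ q ∈ S, q.1) w := by
  induction w generalizing S with
  | nil => rfl
  | cons a w ih =>
    rw [NFA.evalFrom_cons, ih, canonicalRFA_biUnion_stepSet hfin, res_res, List.singleton_append]

theorem canonicalRFA_biUnion_start (hfin : (Res L).Finite) :
    ⋃ q ∈ (canonicalRFA L).start, q.1 = L :=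
  biUnion_isPrimeIn_subset hfin ⟨[], rfl⟩

theorem mem_acceptsFrom_canonicalRFA (hfin : (Res L).Finite)
    {S : Set {P // IsPrimeIn (Res L) P}} {w : List α} :
    w ∈ (canonicalRFA L).acceptsFrom S ↔ ∃ q ∈ S, w ∈ q.1 := by
  calc w ∈ (canonicalRFA L).acceptsFrom S
      ↔ [] ∈ ⋃ q ∈ (canonicalRFA L).evalFrom S w, q.1 := by
        simp [NFA.mem_acceptsFrom, canonicalRFA, and_comm]
    _ ↔ ∃ q ∈ S, w ∈ q.1 := by
        simp [canonicalRFA_biUnion_evalFrom hfin, res]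

theorem canonicalRFA_mem_eval_of_eq_res (hfin : (Res L).Finite)
    {q : {P // IsPrimeIn (Res L) P}} {u : List α} (hq : q.1 = res L u) :
    q ∈ (canonicalRFA L).eval u := by
  have hunion := canonicalRFA_biUnion_evalFrom hfin (canonicalRFA L).start u
  rw [canonicalRFA_biUnion_start hfin, ← hq, ← Set.sUnion_image] at hunion
  have hle : ∀ R ∈ Subtype.val '' (canonicalRFA L).eval u, R ⊆ q.1 := by
    rintro _ ⟨p, hp, rfl⟩
    rw [← hunion]
    exact Set.subset_sUnion_of_mem ⟨p, hp, rfl⟩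
  have := q.2.mem_of_sUnion_eq (by rintro _ ⟨p, -, rfl⟩; exact p.2.1) hle hunion
  exact Subtype.val_injective.mem_set_image.mp this

end CanonicalRFA

theorem canonicalRFA_saturated {α : Type*} (L : Set (List α)) (hreg : IsRegularLang L) :
    -- saturation: every prime residual contained in `a⁻¹L₁` is a target of the transition
    (∀ (L₁ L₂ : {L' : Set (List α) // IsPrimeIn (Res L) L'}) (a : α),
      L₂.1 ⊆ res L₁.1 [a] → L₂ ∈ (canonicalRFA L).step L₁ a) ∧
    -- adding any other transition makes the automaton accept a string outside `L`
    (∀ (L₁ L₂ : {L' : Set (List α) // IsPrimeIn (Res L) L'}) (a : α),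
      ¬ L₂.1 ⊆ res L₁.1 [a] →
      ∃ w : List α,
        w ∈ (NFA.mk
              (fun q b => (canonicalRFA L).step q b ∪ {q' | q = L₁ ∧ b = a ∧ q' = L₂})
              (canonicalRFA L).start (canonicalRFA L).accept).accepts ∧ w ∉ L) := by
  have hfin := hreg.finite_Res
  refine ⟨fun L₁ L₂ a h => h, fun L₁ L₂ a h => ?_⟩
  obtain ⟨u, hu⟩ := L₁.2.1
  obtain ⟨v, hv₂, hv₁⟩ := Set.not_subset.mp h
  refine ⟨u ++ a :: v, ?_, fun huav => hv₁ (by rw [hu]; exact huav)⟩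
  set M' : NFA α {P // IsPrimeIn (Res L) P} :=
    ⟨fun q b => (canonicalRFA L).step q b ∪ {q' | q = L₁ ∧ b = a ∧ q' = L₂},
      (canonicalRFA L).start, (canonicalRFA L).accept⟩
  have hstep : ∀ q b, (canonicalRFA L).step q b ⊆ M'.step q b := fun _ _ => Set.subset_union_left
  have hL₁ : L₁ ∈ M'.eval u :=
    NFA.evalFrom_subset_evalFrom hstep subset_rfl u (canonicalRFA_mem_eval_of_eq_res hfin hu)
  have hL₂ : L₂ ∈ M'.stepSet (M'.eval u) a :=
    NFA.mem_stepSet.mpr ⟨L₁, hL₁, Or.inr ⟨rfl, rfl, rfl⟩⟩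
  rw [NFA.accepts_eq_acceptsFrom_start, NFA.append_mem_acceptsFrom, NFA.cons_mem_acceptsFrom]
  exact NFA.acceptsFrom_subset_acceptsFrom hstep subset_rfl (Set.singleton_subset_iff.mpr hL₂)
    ((mem_acceptsFrom_canonicalRFA hfin).mpr ⟨L₂, rfl, hv₂⟩)
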